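/- arXiv:math/0604535 — 2 statements merged into one kernel-verified Lean document; each statement's English description precedes it below -/
import Mathlib

section
/- Let (I, <) be a finite partially ordered set and let A = ℤ[v, v⁻¹] with the ring involution ¯ : A → A determined by v ↦ v⁻¹. Suppose (a_{x,y})_{x,y ∈ I} is a matrix with entries in A such that a_{x,x} = 1 for all x, a_{x,y} ≠ 0 implies y < x or y = x, and ∑_{z} ā_{x,z} a_{z,y} = δ_{x,y} for all x, y. Then there exists a unique family (c_{x,y})_{x,y ∈ I} with entries in ℤ[v] such that: c_{x,x} = 1; c_{x,y} ≠ 0 implies y < x or y = x; c_{x,y} ∈ vℤ[v] whenever x ≠ y; and c_{x,y} = ∑_{z} c̄_{x,z} a_{z,y} for all x, y. -/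
/-!
For fixed `x` the `c x y` are determined by downward induction on `y`. With
`F = ∑_{z > y} c̄ x z * a z y`, the equation at `y ≠ x` reads `c x y - c̄ x y = F`. The equations
at all `z > y`, together with `a ā = 1` (equivalent to `ā a = 1`), give `F̄ = -F`; hence `F` has
no constant term and `c x y` must be the part of `F` of positive degree. The difference of two
solutions is a bar-invariant element of `v ℤ[v]`, hence zero.
-/

open LaurentPolynomial Polynomial Finset

namespace LaurentPolynomial

variable {R : Type*} [CommRing R]

theorem coeff_toLaurent_natCast (p : R[X]) (m : ℕ) : (toLaurent p).coeff m = p.coeff m :=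
  Finsupp.mapDomain_apply Nat.castEmbedding.injective _ m

theorem coeff_toLaurent_of_neg (p : R[X]) {n : ℤ} (hn : n < 0) : (toLaurent p).coeff n = 0 := by
  rw [coeff_toLaurent, Finsupp.mapDomain_of_notMem_range]
  rintro ⟨m, rfl⟩
  exact (Nat.cast_nonneg m).not_gt hn

theorem coeff_trunc (f : R[T;T⁻¹]) (m : ℕ) : (trunc f).coeff m = f.coeff m :=
  rfl

theorem _root_.Polynomial.eq_zero_of_invert_toLaurent_eq (p : R[X]) (h0 : p.coeff 0 = 0)
    (hp : invert (toLaurent p) = toLaurent p) : p = 0 := by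
  ext (_ | m)
  · exact h0
  · rw [← coeff_toLaurent_natCast, ← hp, invert_apply,
      coeff_toLaurent_of_neg p (by omega), coeff_zero]

theorem coeff_zero_eq_zero_of_invert_eq_neg [NoZeroDivisors R] [CharZero R] {F : R[T;T⁻¹]}
    (hF : invert F = -F) : F.coeff 0 = 0 :=
  CharZero.eq_neg_self_iff.mp (by simpa using congr_arg (fun f : R[T;T⁻¹] => f.coeff 0) hF)

theorem toLaurent_trunc_sub_invert [NoZeroDivisors R] [CharZero R] {F : R[T;T⁻¹]}
    (hF : invert F = -F) : toLaurent (trunc F) - invert (toLaurent (trunc F)) = F := by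
  have hanti (n : ℤ) : F.coeff (-n) = -F.coeff n := by
    simpa using congr_arg (fun f : R[T;T⁻¹] => f.coeff n) hF
  have h0 : F.coeff 0 = 0 := coeff_zero_eq_zero_of_invert_eq_neg hF
  ext n
  rw [AddMonoidAlgebra.coeff_sub, Finsupp.sub_apply, invert_apply]
  obtain ⟨_ | m, rfl | rfl⟩ := Int.eq_nat_or_neg n
  · simp [h0]
  · simp [h0]
  · rw [coeff_toLaurent_of_neg _ (by omega : -((m + 1 : ℕ) : ℤ) < 0), coeff_toLaurent_natCast,
      coeff_trunc, sub_zero]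
  · rw [coeff_toLaurent_of_neg _ (by omega : -((m + 1 : ℕ) : ℤ) < 0), neg_neg,
      coeff_toLaurent_natCast, coeff_trunc, hanti, zero_sub]

theorem ringHom_apply_eq_invert (bar : ℤ[T;T⁻¹] →+* ℤ[T;T⁻¹]) (hbar : ∀ n, bar (T n) = T (-n))
    (f : ℤ[T;T⁻¹]) : bar f = invert f := by
  induction f using LaurentPolynomial.induction_on' with
  | add p q hp hq => rw [map_add, map_add, hp, hq]
  | C_mul_T n r =>
    have hC : C r = (r : ℤ[T;T⁻¹]) := by rw [C_eq_algebraMap, eq_intCast]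
    rw [map_mul, map_mul, hC, map_intCast, map_intCast, hbar, invert_T]

end LaurentPolynomial

section Unitriangular

variable {A : Type*} [CommRing A] {I : Type*} [Fintype I] [DecidableEq I]

theorem sum_mul_map_eq_ite_of_sum_map_mul {F : Type*} [FunLike F A A] [RingHomClass F A A]
    (σ : F) (a : I → I → A)
    (hunit : ∀ x y, ∑ z, σ (a x z) * a z y = if x = y then 1 else 0) (x y : I) :
    ∑ z, a x z * σ (a z y) = if x = y then 1 else 0 := by
  have hleft : (Matrix.of a).map σ * Matrix.of a = 1 := by
    ext x y
    simpa [Matrix.mul_apply, Matrix.one_apply] using hunit x y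
  have hright : Matrix.of a * (Matrix.of a).map σ = 1 := mul_eq_one_comm.mp hleft
  simpa [Matrix.mul_apply, Matrix.one_apply] using congrFun₂ hright x y

variable [PartialOrder I] [DecidableLT I]

theorem sum_mul_eq_add_sum_gt (b : I → I → A) {y : I} (hdiag : b y y = 1)
    (htri : ∀ z, b z y ≠ 0 → y ≤ z) (g : I → A) :
    ∑ z, g z * b z y = g y + ∑ z with y < z, g z * b z y := by
  rw [← add_sum_erase _ _ (mem_univ y), hdiag, mul_one]
  congr 1
  refine (sum_subset (fun z hz => ?_) fun z hz hgt => ?_).symm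
  · simpa using (mem_filter.mp hz).2.ne'
  · have hyz : ¬ y ≤ z := fun h => hgt (by simpa using h.lt_of_ne (ne_of_mem_erase hz).symm)
    rw [not_imp_comm.mp (htri z) hyz, mul_zero]

theorem map_sum_gt_eq_neg {F : Type*} [FunLike F A A] [RingHomClass F A A] (σ : F)
    (hσ : Function.Involutive σ) (a : I → I → A)
    (hdiag : ∀ x, a x x = 1) (htri : ∀ x y, a x y ≠ 0 → y ≤ x)
    (hunit : ∀ x y, ∑ z, σ (a x z) * a z y = if x = y then 1 else 0)
    (r : I → A) (y : I) (hr : ∀ z, y < z → r z = ∑ w, σ (r w) * a w z) :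
    σ (∑ z with y < z, σ (r z) * a z y) = -∑ z with y < z, σ (r z) * a z y := by
  have hright : ∀ w, ∑ z with y < z, a w z * σ (a z y) = (if w = y then 1 else 0) - a w y := by
    intro w
    rw [← sum_mul_map_eq_ite_of_sum_map_mul σ a hunit w y,
      sum_mul_eq_add_sum_gt (fun z y => σ (a z y)) (by simp [hdiag])
        (fun z hz => htri z y fun h => hz (by simp [h]))]
    ring
  calc σ (∑ z with y < z, σ (r z) * a z y)
      = ∑ z with y < z, ∑ w, σ (r w) * a w z * σ (a z y) := by
        rw [map_sum]
        refine sum_congr rfl fun z hz => ?_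
        rw [map_mul, hσ, hr z (mem_filter.mp hz).2, sum_mul]
    _ = ∑ w, σ (r w) * ((if w = y then 1 else 0) - a w y) := by
        rw [sum_comm]
        simp_rw [← hright, mul_sum, mul_assoc]
    _ = σ (r y) - ∑ z, σ (r z) * a z y := by
        simp [mul_sub, sum_sub_distrib]
    _ = -∑ z with y < z, σ (r z) * a z y := by
        rw [sum_mul_eq_add_sum_gt a (hdiag y) (fun z => htri z y)]
        ring

end Unitriangular

section KazhdanLusztig

variable {R : Type*} [CommRing R] {I : Type*} [Fintype I] [DecidableEq I] [PartialOrder I]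
  [DecidableLT I] (a : I → I → R[T;T⁻¹])

-- `klRow a x y` is the entry `c x y` of the solution.
noncomputable def klRow (x : I) : I → R[X] :=
  wellFounded_gt.fix fun y klRow_gt => if x = y then 1 else
    trunc (∑ z : {z // y < z}, invert (toLaurent (klRow_gt z z.2)) * a z y)

theorem klRow_eq (x y : I) : klRow a x y = if x = y then 1 else
    trunc (∑ z with y < z, invert (toLaurent (klRow a x z)) * a z y) := by
  rw [sum_subtype _ (p := (y < ·)) (by simp)]
  exact WellFounded.fix_eq _ _ _

theorem klRow_self (x : I) : klRow a x x = 1 := by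
  rw [klRow_eq, if_pos rfl]

theorem klRow_eq_zero_of_not_le {x y : I} (h : ¬ y ≤ x) : klRow a x y = 0 := by
  induction y using WellFoundedGT.induction with
  | _ y ih =>
  rw [klRow_eq, if_neg (fun hxy => h hxy.ge), sum_eq_zero, map_zero]
  intro z hz
  rw [ih z (mem_filter.mp hz).2 fun hzx => h ((mem_filter.mp hz).2.le.trans hzx)]
  simp

variable [NoZeroDivisors R] [CharZero R]

theorem toLaurent_klRow (hdiag : ∀ x, a x x = 1) (htri : ∀ x y, a x y ≠ 0 → y ≤ x)
    (hunit : ∀ x y, ∑ z, invert (a x z) * a z y = if x = y then 1 else 0) (x y : I) :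
    toLaurent (klRow a x y) = ∑ z, invert (toLaurent (klRow a x z)) * a z y := by
  induction y using WellFoundedGT.induction with
  | _ y ih =>
  have hanti := map_sum_gt_eq_neg invert involutive_invert a hdiag htri hunit
    (fun z => toLaurent (klRow a x z)) y ih
  rw [sum_mul_eq_add_sum_gt a (hdiag y) (fun z => htri z y)]
  by_cases hxy : x = y
  · subst hxy
    rw [sum_eq_zero fun z hz => by simp [klRow_eq_zero_of_not_le a (mem_filter.mp hz).2.not_ge]]
    simp [klRow_self]
  · rw [klRow_eq a x y, if_neg hxy]
    exact eq_add_of_sub_eq' (toLaurent_trunc_sub_invert hanti)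

theorem coeff_zero_klRow (hdiag : ∀ x, a x x = 1) (htri : ∀ x y, a x y ≠ 0 → y ≤ x)
    (hunit : ∀ x y, ∑ z, invert (a x z) * a z y = if x = y then 1 else 0) {x y : I}
    (hxy : x ≠ y) : (klRow a x y).coeff 0 = 0 := by
  rw [klRow_eq, if_neg hxy]
  exact coeff_zero_eq_zero_of_invert_eq_neg (map_sum_gt_eq_neg invert involutive_invert a hdiag
    htri hunit _ y fun z _ => toLaurent_klRow a hdiag htri hunit x z)

theorem eq_klRow (hdiag : ∀ x, a x x = 1) (htri : ∀ x y, a x y ≠ 0 → y ≤ x)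
    (hunit : ∀ x y, ∑ z, invert (a x z) * a z y = if x = y then 1 else 0) (x : I)
    (c : I → R[X]) (hc_self : c x = 1) (hc_coeff : ∀ y, x ≠ y → (c y).coeff 0 = 0)
    (hc : ∀ y, toLaurent (c y) = ∑ z, invert (toLaurent (c z)) * a z y) (y : I) :
    c y = klRow a x y := by
  induction y using WellFoundedGT.induction with
  | _ y ih =>
  by_cases hxy : x = y
  · rw [← hxy, hc_self, klRow_self]
  have hsplit (r : I → R[X]) (hr : toLaurent (r y) = ∑ z, invert (toLaurent (r z)) * a z y) :
      toLaurent (r y) = invert (toLaurent (r y)) +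
        ∑ z with y < z, invert (toLaurent (r z)) * a z y := by
    rwa [sum_mul_eq_add_sum_gt a (hdiag y) (fun z => htri z y)] at hr
  have htail : ∑ z with y < z, invert (toLaurent (c z)) * a z y =
      ∑ z with y < z, invert (toLaurent (klRow a x z)) * a z y :=
    sum_congr rfl fun z hz => by rw [ih z (mem_filter.mp hz).2]
  have hc_split := hsplit c (hc y)
  have hk_split := hsplit (klRow a x) (toLaurent_klRow a hdiag htri hunit x y)
  rw [← sub_eq_zero]
  refine eq_zero_of_invert_toLaurent_eq _ ?_ ?_
  · rw [coeff_sub, hc_coeff y hxy, coeff_zero_klRow a hdiag htri hunit hxy, sub_zero]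
  · rw [map_sub, map_sub]
    linear_combination hk_split - hc_split - htail

end KazhdanLusztig

/-- Kazhdan–Lusztig-type basis construction (§1.13). -/
theorem stmt0 {I : Type*} [Fintype I] [DecidableEq I] [PartialOrder I]
    (bar : LaurentPolynomial ℤ →+* LaurentPolynomial ℤ)
    (hbar : ∀ n : ℤ, bar (LaurentPolynomial.T n) = LaurentPolynomial.T (-n))
    (a : I → I → LaurentPolynomial ℤ)
    (hdiag : ∀ x, a x x = 1)
    (htri : ∀ x y, a x y ≠ 0 → y < x ∨ y = x)
    (hunit : ∀ x y, ∑ z, bar (a x z) * a z y = if x = y then 1 else 0) :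
    ∃! c : I → I → Polynomial ℤ,
      (∀ x, c x x = 1) ∧
      (∀ x y, c x y ≠ 0 → y < x ∨ y = x) ∧
      (∀ x y, x ≠ y → (c x y).coeff 0 = 0) ∧
      (∀ x y, Polynomial.toLaurent (c x y) =
        ∑ z, bar (Polynomial.toLaurent (c x z)) * a z y) := by
  classical
  simp only [ringHom_apply_eq_invert bar hbar] at hunit ⊢
  have htri_le : ∀ x y, a x y ≠ 0 → y ≤ x := fun x y h => (htri x y h).elim le_of_lt le_of_eq
  refine ⟨klRow a, ⟨klRow_self a, fun x y h => ?_,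
    fun x y => coeff_zero_klRow a hdiag htri_le hunit, toLaurent_klRow a hdiag htri_le hunit⟩, ?_⟩
  · exact lt_or_eq_of_le (not_imp_comm.mp (klRow_eq_zero_of_not_le a) h)
  · rintro c ⟨hc_self, -, hc_coeff, hc⟩
    funext x y
    exact eq_klRow a hdiag htri_le hunit x (c x) (hc_self x) (hc_coeff x) (hc x) y
end

section
/- Let A = ℤ[v,v⁻¹] with bar involution v ↦ v⁻¹, let M be a free ℤ[v]-module with finite basis (W_u)_{u ∈ U}, let K = ℚ(v) ⊗_{ℤ[v]} M, and let β : K → K be the bar-semilinear involution determined by β(W_u) = W_u for all u. Suppose (z_u)_{u ∈ U} is another family in M with z_u ≡ W_u mod vM for all u. Then for every u ∈ U, W_u is the unique element x ∈ M satisfying β(x) = x and x ≡ z_u mod vM. -/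
/-!
A bar-fixed element `q(v)` of `ℤ[v]` is a constant: `q(v⁻¹) = q(v)` gives
`v^d q(v) = rev q (v)` with `d = deg q`, and comparing degrees forces `d = 0`.
So if `x` is bar-fixed with `x ≡ z_u ≡ W_u mod vM`, every coordinate of `x - W_u` is a
constant lying in `vℤ[v]`, hence zero.
-/

/-- `r ∈ ℚ(v)` lies in `ℤ[v]`. -/
def inZPoly (r : RatFunc ℚ) : Prop :=
  ∃ p : Polynomial ℤ, r = algebraMap (Polynomial ℚ) (RatFunc ℚ) (p.map (Int.castRingHom ℚ))

/-- `r ∈ ℚ(v)` lies in `vℤ[v]`. -/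
def inVZPoly (r : RatFunc ℚ) : Prop :=
  ∃ p : Polynomial ℤ,
    r = algebraMap (Polynomial ℚ) (RatFunc ℚ) (Polynomial.X * p.map (Int.castRingHom ℚ))

open Polynomial

theorem inVZPoly.add {r s : RatFunc ℚ} (hr : inVZPoly r) (hs : inVZPoly s) :
    inVZPoly (r + s) := by
  obtain ⟨p, rfl⟩ := hr
  obtain ⟨q, rfl⟩ := hs
  exact ⟨p + q, by rw [Polynomial.map_add, mul_add, map_add]⟩

theorem inVZPoly.neg {r : RatFunc ℚ} (hr : inVZPoly r) : inVZPoly (-r) := by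
  obtain ⟨p, rfl⟩ := hr
  exact ⟨-p, by rw [Polynomial.map_neg, mul_neg, map_neg]⟩

theorem eq_of_inVZPoly_algebraMap_sub {c d : ℚ}
    (h : inVZPoly (algebraMap ℚ (RatFunc ℚ) c - algebraMap ℚ (RatFunc ℚ) d)) : c = d := by
  obtain ⟨p, hp⟩ := h
  rw [← map_sub, IsScalarTower.algebraMap_apply ℚ ℚ[X] (RatFunc ℚ),
    Polynomial.algebraMap_apply] at hp
  simpa [sub_eq_zero] using congrArg (coeff · 0) (RatFunc.algebraMap_injective ℚ hp)

theorem eval₂_ratFuncX_eq_algebraMap (q : ℚ[X]) :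
    q.eval₂ (algebraMap ℚ (RatFunc ℚ)) RatFunc.X = algebraMap ℚ[X] (RatFunc ℚ) q := by
  induction q using Polynomial.induction_on' with
  | add p q hp hq => rw [eval₂_add, hp, hq, map_add]
  | monomial n a =>
    simp [← C_mul_X_pow_eq_monomial, IsScalarTower.algebraMap_apply ℚ ℚ[X] (RatFunc ℚ)]

theorem bar_algebraMap_eq_eval₂_X_inv (barQ : RatFunc ℚ →+* RatFunc ℚ)
    (hbarX : barQ RatFunc.X = RatFunc.X⁻¹) (q : ℚ[X]) :
    barQ (algebraMap ℚ[X] (RatFunc ℚ) q) = q.eval₂ (algebraMap ℚ (RatFunc ℚ)) RatFunc.X⁻¹ := by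
  induction q using Polynomial.induction_on' with
  | add p q hp hq => rw [map_add, map_add, hp, hq, eval₂_add]
  | monomial n a =>
    simp [← C_mul_X_pow_eq_monomial, hbarX, IsScalarTower.algebraMap_apply ℚ ℚ[X] (RatFunc ℚ)]

theorem natDegree_eq_zero_of_bar_fixed (barQ : RatFunc ℚ →+* RatFunc ℚ)
    (hbarX : barQ RatFunc.X = RatFunc.X⁻¹) (q : ℚ[X])
    (hq : barQ (algebraMap ℚ[X] (RatFunc ℚ) q) = algebraMap ℚ[X] (RatFunc ℚ) q) :
    q.natDegree = 0 := by
  rcases eq_or_ne q 0 with rfl | hq0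
  · rfl
  have hX : (RatFunc.X : RatFunc ℚ) ≠ 0 := RatFunc.X_ne_zero
  let : Invertible (RatFunc.X⁻¹ : RatFunc ℚ) := invertibleOfNonzero (inv_ne_zero hX)
  have hrev := eval₂_reverse_mul_pow (algebraMap ℚ (RatFunc ℚ)) (RatFunc.X⁻¹ : RatFunc ℚ) q
  rw [invOf_eq_inv, inv_inv, ← bar_algebraMap_eq_eval₂_X_inv barQ hbarX, hq,
    eval₂_ratFuncX_eq_algebraMap] at hrev
  have hreverse : q.reverse = q * X ^ q.natDegree := by
    apply RatFunc.algebraMap_injective ℚ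
    rw [map_mul, map_pow, RatFunc.algebraMap_X, ← hrev, mul_assoc, ← mul_pow,
      inv_mul_cancel₀ hX, one_pow, mul_one]
  have hdeg := congrArg natDegree hreverse
  rw [natDegree_mul hq0 (pow_ne_zero _ X_ne_zero), natDegree_X_pow] at hdeg
  have := q.reverse_natDegree_le
  omega

theorem inZPoly.exists_eq_algebraMap_of_bar_fixed (barQ : RatFunc ℚ →+* RatFunc ℚ)
    (hbarX : barQ RatFunc.X = RatFunc.X⁻¹) {r : RatFunc ℚ} (hr : inZPoly r)
    (hfix : barQ r = r) :
    ∃ c : ℚ, r = algebraMap ℚ (RatFunc ℚ) c := by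
  obtain ⟨p, rfl⟩ := hr
  obtain ⟨c, hc⟩ := natDegree_eq_zero.mp (natDegree_eq_zero_of_bar_fixed barQ hbarX _ hfix)
  refine ⟨c, ?_⟩
  rw [← hc, IsScalarTower.algebraMap_apply ℚ ℚ[X] (RatFunc ℚ), Polynomial.algebraMap_apply]
  rfl

theorem inZPoly_intCast (n : ℤ) : inZPoly n :=
  ⟨C n, by simp⟩

theorem stmt11_general {U : Type*} [DecidableEq U]
    (barQ : RatFunc ℚ →+* RatFunc ℚ)
    (hbarX : barQ RatFunc.X = (RatFunc.X)⁻¹)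
    (z : U → U → RatFunc ℚ)
    (hz : ∀ u u', inVZPoly (z u u' - (Pi.single u 1 : U → RatFunc ℚ) u')) :
    ∀ u : U, ∀ x : U → RatFunc ℚ,
      ((∀ u', inZPoly (x u')) ∧ (∀ u', barQ (x u') = x u') ∧
        (∀ u', inVZPoly (x u' - z u u'))) ↔ x = (Pi.single u 1 : U → RatFunc ℚ) := by
  intro u x
  have hW (u' : U) :
      (Pi.single u 1 : U → RatFunc ℚ) u' = (((Pi.single u 1 : U → ℤ) u' : ℤ) : RatFunc ℚ) := by
    simp [Pi.single_apply, apply_ite]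
  constructor
  · rintro ⟨hxZ, hxfix, hxz⟩
    funext u'
    obtain ⟨c, hc⟩ := (hxZ u').exists_eq_algebraMap_of_bar_fixed barQ hbarX (hxfix u')
    have hxW : inVZPoly (x u' - (Pi.single u 1 : U → RatFunc ℚ) u') := by
      simpa using (hxz u').add (hz u u')
    rw [hc, hW, ← map_intCast (algebraMap ℚ (RatFunc ℚ))] at hxW ⊢
    rw [eq_of_inVZPoly_algebraMap_sub hxW]
  · rintro rfl
    refine ⟨fun u' => ?_, fun u' => ?_, fun u' => by simpa using (hz u u').neg⟩
    · rw [hW]; exact inZPoly_intCast _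
    · rw [hW, map_intCast]

/-- §4.7: characterization of the canonical basis. Model: `K = U → ℚ(v)` with standard
basis `W_u = Pi.single u 1`, `M` the `ℤ[v]`-span of the `W_u` (coordinatewise `ℤ[v]`),
and `β` the coordinatewise bar involution, which fixes each `W_u`. Given a family
`z u ∈ M` with `z u ≡ W u mod vM`, each `W u` is the unique bar-fixed element of `M`
congruent to `z u mod vM`. -/
theorem stmt11 {U : Type*} [Fintype U] [DecidableEq U]
    (barQ : RatFunc ℚ →+* RatFunc ℚ)
    (hbarX : barQ RatFunc.X = (RatFunc.X)⁻¹)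
    (hbar2 : ∀ r, barQ (barQ r) = r)
    (z : U → U → RatFunc ℚ)
    (hzM : ∀ u u', inZPoly (z u u'))
    (hz : ∀ u u', inVZPoly (z u u' - (Pi.single u 1 : U → RatFunc ℚ) u')) :
    ∀ u : U, ∀ x : U → RatFunc ℚ,
      ((∀ u', inZPoly (x u')) ∧ (∀ u', barQ (x u') = x u') ∧
        (∀ u', inVZPoly (x u' - z u u'))) ↔ x = (Pi.single u 1 : U → RatFunc ℚ) :=
  stmt11_general barQ hbarX z hz
end
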